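/- arXiv:0805.0380 — 2 statements merged into one kernel-verified Lean document; each statement's English description precedes it below -/
import Mathlib

section
/- Define the diagonal function 𝒢_n : V_n → ℝ by 𝒢_n(x) = G_n(x,x) for x ∈ V_n∖V₀ and 𝒢_n(a_i) = 0 for i = 0,1,2. Then for every n ≥ 1: (a) for all x, y ∈ V_n with x ∼_n y, |𝒢_n(x) − 𝒢_n(y)| ≤ (3/5)^n; and consequently (b) for every x ∈ V_n, |Δ_n 𝒢_n(x)| ≤ 4·3^n. -/
open scoped Classical
open Real Set

noncomputable section

abbrev Pt : Type := ℝ × ℝ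

/-- The three corners of the unit triangle. -/
def sierA : Fin 3 → Pt
  | 0 => (0, 0)
  | 1 => (1 / 2, Real.sqrt 3 / 2)
  | 2 => (1, 0)

/-- The three contractions `φᵢ(x) = (x + aᵢ)/2`. -/
def ctr (i : Fin 3) (x : Pt) : Pt :=
  ((x.1 + (sierA i).1) / 2, (x.2 + (sierA i).2) / 2)

/-- The vertex sets `V n`. -/
def V : ℕ → Finset Pt
  | 0 => {sierA 0, sierA 1, sierA 2}
  | n + 1 => (V n).image (ctr 0) ∪ (V n).image (ctr 1) ∪ (V n).image (ctr 2)

/-- The (ordered) edge sets: `(x, y) ∈ Ed n` iff `{x,y} ∈ E_n`; each undirected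
edge appears with both orientations. -/
def Ed : ℕ → Finset (Pt × Pt)
  | 0 => (V 0 ×ˢ V 0).filter fun p => p.1 ≠ p.2
  | n + 1 => Finset.univ.biUnion fun i : Fin 3 => (Ed n).image fun p => (ctr i p.1, ctr i p.2)

/-- `V* = ⋃ n, V n`. -/
def Vstar : Set Pt := ⋃ n, (V n : Set Pt)

/-- The level-`n` energy `E_n(u,u) = (5/3)^n Σ_{{x,y} ∈ E_n} (u y - u x)²`
(each undirected edge counted once, whence the division by 2). -/
def En (n : ℕ) (u : Pt → ℝ) : ℝ :=
  (5 / 3 : ℝ) ^ n * (∑ p ∈ Ed n, (u p.2 - u p.1) ^ 2) / 2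

/-- The discrete Laplacian `Δ_n u (x) = 5^n Σ_{y ∼ₙ x} (u y - u x)`. -/
def lap (n : ℕ) (u : Pt → ℝ) (x : Pt) : ℝ :=
  (5 : ℝ) ^ n * ∑ p ∈ (Ed n).filter (fun p => p.1 = x), (u p.2 - u p.1)

/-- `g` is the level-`n` Green function with pole at `y`: it solves the
discrete Dirichlet problem `Δ_n g (y) = −3^n`, `Δ_n g (x) = 0` for
`x ∈ V_n ∖ (V₀ ∪ {y})`, and `g = 0` on `V₀ = {a₀,a₁,a₂}`. -/
def IsGreen (n : ℕ) (y : Pt) (g : Pt → ℝ) : Prop :=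
  lap n g y = -(3 : ℝ) ^ n ∧
  (∀ x ∈ (V n : Set Pt), x ∉ (V 0 : Set Pt) → x ≠ y → lap n g x = 0) ∧
  ∀ i : Fin 3, g (sierA i) = 0

/-- `G` is the full level-`n` Green function `G_n(x,y)`. -/
def IsGreenFamily (n : ℕ) (G : Pt → Pt → ℝ) : Prop :=
  (∀ y ∈ (V n : Set Pt), y ∉ (V 0 : Set Pt) → IsGreen n y (fun x => G x y)) ∧
  ∀ y ∈ (V 0 : Set Pt), ∀ x : Pt, G x y = 0

/-!
Test the Green functions with poles at two neighbours `x ∼ₙ y` against their difference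
`F = G(·,x) − G(·,y)`: summation by parts gives `5ⁿ E(F,F) = 2·3ⁿ (F x − F y)` for the
edge energy `E`, and the edge `{x,y}` alone contributes `2 (F x − F y)²` to `E(F,F)`, so
`F x − F y ≤ (3/5)ⁿ`. Symmetry of `G` and the maximum principle `G(y,x) ≤ G(x,x)` give
`F x ≥ 0 ≥ F y` and `F x + F y = G(x,x) − G(y,y)`, which is (a). Part (b) follows because
every vertex has at most four neighbours: two of the cells `ctr i '' V n` meet at most in a common
corner, and a corner has only two neighbours inside its cell.
-/

-- Barycentric coordinates with respect to the corners `sierA 0`, `sierA 1`, `sierA 2`.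
def bary : Fin 3 → Pt → ℝ
  | 0 => fun p => 1 - p.1 - p.2 / √3
  | 1 => fun p => 2 * p.2 / √3
  | 2 => fun p => p.1 - p.2 / √3

lemma bary_sierA (k i : Fin 3) : bary k (sierA i) = if k = i then 1 else 0 := by
  have : √3 ≠ 0 := by positivity
  fin_cases k <;> fin_cases i <;> simp [bary, sierA] <;> field_simp <;> ring

lemma bary_sum (p : Pt) : bary 0 p + bary 1 p + bary 2 p = 1 := by
  simp only [bary]; ring

lemma bary_ctr (k i : Fin 3) (x : Pt) :
    bary k (ctr i x) = (bary k x + bary k (sierA i)) / 2 := by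
  fin_cases k <;> fin_cases i <;> simp [bary, ctr, sierA] <;> ring

lemma eq_of_bary_eq {x y : Pt} (h1 : bary 1 x = bary 1 y) (h2 : bary 2 x = bary 2 y) :
    x = y := by
  have : √3 ≠ 0 := by positivity
  simp only [bary] at h1 h2
  have e2 : x.2 = y.2 := by field_simp at h1; linarith
  exact Prod.ext (by rw [e2] at h2; linarith) e2

lemma sierA_injective : Function.Injective sierA := by
  intro i j h
  by_contra hij
  have := bary_sierA i j
  rw [← h, bary_sierA, if_pos rfl, if_neg hij] at this
  norm_num at this

lemma ctr_sierA_self (i : Fin 3) : ctr i (sierA i) = sierA i := by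
  fin_cases i <;> simp [ctr, sierA]

lemma ctr_sierA_comm (i j : Fin 3) : ctr i (sierA j) = ctr j (sierA i) := by
  simp only [ctr, Prod.mk.injEq]
  constructor <;> ring

lemma ctr_injective (i : Fin 3) : Function.Injective (ctr i) := by
  intro x y h
  simp only [ctr, Prod.mk.injEq] at h
  exact Prod.ext (by linarith [h.1]) (by linarith [h.2])

lemma mem_V_zero {x : Pt} : x ∈ V 0 ↔ ∃ i, sierA i = x := by
  simp only [V, Finset.mem_insert, Finset.mem_singleton, Fin.exists_fin_succ, Fin.exists_fin_zero]
  grind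

lemma mem_V_succ {n : ℕ} {x : Pt} : x ∈ V (n + 1) ↔ ∃ i, x ∈ (V n).image (ctr i) := by
  simp only [V, Finset.mem_union, Fin.exists_fin_succ, Fin.exists_fin_zero]
  tauto

lemma sierA_mem_V (n : ℕ) (i : Fin 3) : sierA i ∈ V n := by
  induction n with
  | zero => exact mem_V_zero.mpr ⟨i, rfl⟩
  | succ n ih => exact mem_V_succ.mpr ⟨i, Finset.mem_image.mpr ⟨_, ih, ctr_sierA_self i⟩⟩

lemma bary_nonneg {n : ℕ} {x : Pt} (hx : x ∈ V n) (k : Fin 3) : 0 ≤ bary k x := by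
  induction n generalizing x with
  | zero =>
    obtain ⟨i, rfl⟩ := mem_V_zero.mp hx
    rw [bary_sierA]; split <;> norm_num
  | succ n ih =>
    obtain ⟨i, hx⟩ := mem_V_succ.mp hx
    obtain ⟨v, hv, rfl⟩ := Finset.mem_image.mp hx
    rw [bary_ctr, bary_sierA]
    have := ih hv
    split <;> linarith

lemma bary_le_one {n : ℕ} {x : Pt} (hx : x ∈ V n) (k : Fin 3) : bary k x ≤ 1 := by
  have := bary_sum x
  have := bary_nonneg hx 0
  have := bary_nonneg hx 1
  have := bary_nonneg hx 2
  fin_cases k <;> simp <;> linarith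

lemma eq_sierA_of_bary_eq_one {n : ℕ} {x : Pt} (hx : x ∈ V n) {i : Fin 3}
    (h : bary i x = 1) : x = sierA i := by
  have := bary_sum x
  have := bary_nonneg hx 0
  have := bary_nonneg hx 1
  have := bary_nonneg hx 2
  apply eq_of_bary_eq <;> rw [bary_sierA] <;> fin_cases i <;> simp_all <;> linarith

lemma eq_sierA_of_ctr_eq_ctr {n : ℕ} {i j : Fin 3} (hij : i ≠ j) {u v : Pt}
    (hu : u ∈ V n) (hv : v ∈ V n) (h : ctr i u = ctr j v) : u = sierA j := by
  have hj := congrArg (bary j) h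
  rw [bary_ctr, bary_ctr, bary_sierA, bary_sierA, if_neg hij.symm, if_pos rfl] at hj
  have := bary_le_one hu j
  have := bary_nonneg hv j
  exact eq_sierA_of_bary_eq_one hu (by linarith)

lemma mem_Ed_succ {n : ℕ} {p : Pt × Pt} :
    p ∈ Ed (n + 1) ↔ ∃ i, ∃ q ∈ Ed n, (ctr i q.1, ctr i q.2) = p := by
  simp only [Ed, Finset.mem_biUnion, Finset.mem_univ, true_and, Finset.mem_image]

lemma mem_V_of_mem_Ed {n : ℕ} {p : Pt × Pt} (hp : p ∈ Ed n) : p.1 ∈ V n ∧ p.2 ∈ V n := by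
  induction n generalizing p with
  | zero => exact Finset.mem_product.mp (Finset.mem_filter.mp hp).1
  | succ n ih =>
    obtain ⟨i, q, hq, rfl⟩ := mem_Ed_succ.mp hp
    exact ⟨mem_V_succ.mpr ⟨i, Finset.mem_image_of_mem _ (ih hq).1⟩,
      mem_V_succ.mpr ⟨i, Finset.mem_image_of_mem _ (ih hq).2⟩⟩

lemma ne_of_mem_Ed {n : ℕ} {p : Pt × Pt} (hp : p ∈ Ed n) : p.1 ≠ p.2 := by
  induction n generalizing p with
  | zero => exact (Finset.mem_filter.mp hp).2
  | succ n ih =>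
    obtain ⟨i, q, hq, rfl⟩ := mem_Ed_succ.mp hp
    exact fun h => ih hq (ctr_injective i h)

lemma swap_mem_Ed {n : ℕ} {p : Pt × Pt} (hp : p ∈ Ed n) : p.swap ∈ Ed n := by
  induction n generalizing p with
  | zero =>
    simp only [Ed, Finset.mem_filter, Finset.mem_product] at hp ⊢
    exact ⟨hp.1.symm, hp.2.symm⟩
  | succ n ih =>
    obtain ⟨i, q, hq, rfl⟩ := mem_Ed_succ.mp hp
    exact mem_Ed_succ.mpr ⟨i, q.swap, ih hq, rfl⟩

def Adj (n : ℕ) (x y : Pt) : Prop := (x, y) ∈ Ed n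

lemma reflTransGen_adj_sierA {n : ℕ} {x : Pt} (hx : x ∈ V n) (i : Fin 3) :
    Relation.ReflTransGen (Adj n) x (sierA i) := by
  induction n generalizing x i with
  | zero =>
    obtain ⟨j, rfl⟩ := mem_V_zero.mp hx
    by_cases hji : j = i
    · rw [hji]
    · refine Relation.ReflTransGen.single (Finset.mem_filter.mpr ⟨?_, ?_⟩)
      · exact Finset.mem_product.mpr ⟨hx, sierA_mem_V 0 i⟩
      · exact fun h => hji (sierA_injective h)
  | succ n ih =>
    obtain ⟨j, hx⟩ := mem_V_succ.mp hx
    obtain ⟨v, hv, rfl⟩ := Finset.mem_image.mp hx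
    have lift : ∀ {a b : Pt}, Relation.ReflTransGen (Adj n) a b → ∀ l,
        Relation.ReflTransGen (Adj (n + 1)) (ctr l a) (ctr l b) := fun h l =>
      h.lift (ctr l) fun a b hab => mem_Ed_succ.mpr ⟨l, (a, b), hab, rfl⟩
    -- go from `v` to the corner `sierA i` inside cell `j`, then through cell `i`
    have h₁ := lift (ih hv i) j
    have h₂ := lift (ih (sierA_mem_V n j) i) i
    rw [ctr_sierA_comm] at h₁
    rw [ctr_sierA_self] at h₂
    exact h₁.trans h₂

def degree (n : ℕ) (x : Pt) : ℕ := ((Ed n).filter fun p => p.1 = x).card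

-- The number of edges at `x` lying in the `i`-th cell `ctr i '' V n` of level `n + 1`.
def cellDegree (n : ℕ) (i : Fin 3) (x : Pt) : ℕ :=
  (((Ed n).image fun p => (ctr i p.1, ctr i p.2)).filter fun p => p.1 = x).card

lemma degree_zero_le (x : Pt) : degree 0 x ≤ ((V 0).erase x).card := by
  refine Finset.card_le_card_of_injOn Prod.snd (fun p hp => ?_) (fun p hp q hq h => ?_)
  · obtain ⟨hpE, rfl⟩ := Finset.mem_filter.mp (Finset.mem_coe.mp hp)
    exact Finset.mem_erase.mpr ⟨(ne_of_mem_Ed hpE).symm, (mem_V_of_mem_Ed hpE).2⟩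
  · exact Prod.ext (((Finset.mem_filter.mp hp).2).trans (Finset.mem_filter.mp hq).2.symm) h

lemma degree_succ_le (n : ℕ) (x : Pt) : degree (n + 1) x ≤ ∑ i, cellDegree n i x := by
  rw [degree, Ed, Finset.filter_biUnion]
  exact Finset.card_biUnion_le

lemma cellDegree_le {n : ℕ} {i : Fin 3} {x v : Pt} (hx : ctr i v = x) :
    cellDegree n i x ≤ degree n v := by
  rw [cellDegree, ← hx, degree]
  refine le_trans (Finset.card_le_card fun p hp => ?_)
    (Finset.card_image_le (f := fun p => (ctr i p.1, ctr i p.2)))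
  obtain ⟨hp, hpx⟩ := Finset.mem_filter.mp hp
  obtain ⟨q, hq, rfl⟩ := Finset.mem_image.mp hp
  exact Finset.mem_image.mpr ⟨q, Finset.mem_filter.mpr ⟨hq, ctr_injective i hpx⟩, rfl⟩

lemma cellDegree_eq_zero {n : ℕ} {i : Fin 3} {x : Pt} (hx : x ∉ (V n).image (ctr i)) :
    cellDegree n i x = 0 := by
  rw [cellDegree, Finset.card_eq_zero, Finset.filter_eq_empty_iff]
  rintro _ hp rfl
  obtain ⟨q, hq, rfl⟩ := Finset.mem_image.mp hp
  exact hx (Finset.mem_image_of_mem _ (mem_V_of_mem_Ed hq).1)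

lemma eq_of_sierA_mem_image_ctr {n : ℕ} {i l : Fin 3} (h : sierA i ∈ (V n).image (ctr l)) :
    l = i := by
  by_contra hli
  obtain ⟨u, hu, hui⟩ := Finset.mem_image.mp h
  have := eq_sierA_of_ctr_eq_ctr (Ne.symm hli) (sierA_mem_V n i) hu
    (by rw [ctr_sierA_self, hui])
  exact hli (sierA_injective this).symm

lemma degree_sierA_le_two (n : ℕ) (i : Fin 3) : degree n (sierA i) ≤ 2 := by
  induction n with
  | zero =>
    refine (degree_zero_le _).trans ?_
    rw [Finset.card_erase_of_mem (sierA_mem_V 0 i)]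
    have : (V 0).card ≤ 3 := Finset.card_le_three
    omega
  | succ n ih =>
    refine (degree_succ_le n _).trans ?_
    rw [Finset.sum_eq_single i (fun l _ hli => cellDegree_eq_zero
      fun h => hli (eq_of_sierA_mem_image_ctr h)) (by simp)]
    exact (cellDegree_le (ctr_sierA_self i)).trans ih

lemma cellDegree_le_two {n : ℕ} {i j : Fin 3} (hij : i ≠ j) {x : Pt}
    (hi : x ∈ (V n).image (ctr i)) (hj : x ∈ (V n).image (ctr j)) : cellDegree n i x ≤ 2 := by
  obtain ⟨u, hu, rfl⟩ := Finset.mem_image.mp hi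
  obtain ⟨v, hv, hvu⟩ := Finset.mem_image.mp hj
  obtain rfl := eq_sierA_of_ctr_eq_ctr hij hu hv hvu.symm
  exact (cellDegree_le rfl).trans (degree_sierA_le_two n j)

lemma eq_of_mem_three_cells {n : ℕ} {x : Pt} {i j k : Fin 3} (hij : i ≠ j) (hik : i ≠ k)
    (hi : x ∈ (V n).image (ctr i)) (hj : x ∈ (V n).image (ctr j))
    (hk : x ∈ (V n).image (ctr k)) : j = k := by
  obtain ⟨u, hu, rfl⟩ := Finset.mem_image.mp hi
  obtain ⟨v, hv, hvu⟩ := Finset.mem_image.mp hj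
  obtain ⟨w, hw, hwu⟩ := Finset.mem_image.mp hk
  exact sierA_injective <| (eq_sierA_of_ctr_eq_ctr hij hu hv hvu.symm).symm.trans
    (eq_sierA_of_ctr_eq_ctr hik hu hw hwu.symm)

lemma degree_le_four (n : ℕ) (x : Pt) : degree n x ≤ 4 := by
  induction n generalizing x with
  | zero =>
    refine (degree_zero_le x).trans ((Finset.card_erase_le).trans ?_)
    exact Finset.card_le_three.trans (by norm_num)
  | succ n ih =>
    refine (degree_succ_le n x).trans ?_
    by_cases hshared : ∃ i j, i ≠ j ∧ x ∈ (V n).image (ctr i) ∧ x ∈ (V n).image (ctr j)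
    · obtain ⟨i, j, hij, hi, hj⟩ := hshared
      rw [Finset.sum_eq_add_of_mem i j (by simp) (by simp) hij fun l _ hl =>
        cellDegree_eq_zero fun h => hl.2 (eq_of_mem_three_cells hij (Ne.symm hl.1) hi hj h).symm]
      have := cellDegree_le_two hij hi hj
      have := cellDegree_le_two hij.symm hj hi
      omega
    · by_cases hcell : ∃ i, x ∈ (V n).image (ctr i)
      · obtain ⟨i, hi⟩ := hcell
        obtain ⟨v, -, hv⟩ := Finset.mem_image.mp hi
        rw [Finset.sum_eq_single i (fun l _ hli => cellDegree_eq_zero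
          fun hl => hshared ⟨i, l, Ne.symm hli, hi, hl⟩) (by simp)]
        exact (cellDegree_le hv).trans (ih v)
      · push Not at hcell
        simp [cellDegree_eq_zero, hcell]

section EdgeForm

variable {α : Type*}

def edgeForm (E : Finset (α × α)) (u v : α → ℝ) : ℝ :=
  ∑ p ∈ E, (u p.2 - u p.1) * (v p.2 - v p.1)

lemma edgeForm_comm (E : Finset (α × α)) (u v : α → ℝ) : edgeForm E u v = edgeForm E v u :=
  Finset.sum_congr rfl fun _ _ => mul_comm _ _

lemma edgeForm_sub_left (E : Finset (α × α)) (u u' v : α → ℝ) :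
    edgeForm E (u - u') v = edgeForm E u v - edgeForm E u' v := by
  rw [edgeForm, edgeForm, edgeForm, ← Finset.sum_sub_distrib]
  exact Finset.sum_congr rfl fun _ _ => by simp only [Pi.sub_apply]; ring

lemma edgeForm_self_nonneg (E : Finset (α × α)) (u : α → ℝ) : 0 ≤ edgeForm E u u :=
  Finset.sum_nonneg fun _ _ => mul_self_nonneg _

lemma two_mul_sq_le_edgeForm {E : Finset (α × α)} {p : α × α} (hp : p ∈ E)
    (hswap : p.swap ∈ E) (hne : p.1 ≠ p.2) (u : α → ℝ) :
    2 * (u p.1 - u p.2) ^ 2 ≤ edgeForm E u u := by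
  have hpair : p ≠ p.swap := fun h => hne (congrArg Prod.fst h)
  calc 2 * (u p.1 - u p.2) ^ 2
      = ∑ q ∈ {p, p.swap}, (u q.2 - u q.1) * (u q.2 - u q.1) := by
        rw [Finset.sum_pair hpair, Prod.fst_swap, Prod.snd_swap]; ring
    _ ≤ edgeForm E u u := Finset.sum_le_sum_of_subset_of_nonneg
        (Finset.insert_subset hp (Finset.singleton_subset_iff.mpr hswap))
        fun _ _ _ => mul_self_nonneg _

lemma sum_mul_sum_filter_fst_eq [DecidableEq α] {S : Finset α} {E : Finset (α × α)}
    (hS : ∀ p ∈ E, p.1 ∈ S) (hswap : ∀ p ∈ E, p.swap ∈ E) (u v : α → ℝ) :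
    ∑ x ∈ S, v x * ∑ p ∈ E.filter (fun p => p.1 = x), (u p.2 - u p.1) =
      -edgeForm E u v / 2 := by
  have hfib : ∑ x ∈ S, v x * ∑ p ∈ E.filter (fun p => p.1 = x), (u p.2 - u p.1)
      = ∑ p ∈ E, v p.1 * (u p.2 - u p.1) := by
    rw [← Finset.sum_fiberwise_of_maps_to hS]
    refine Finset.sum_congr rfl fun x _ => ?_
    rw [Finset.mul_sum]
    exact Finset.sum_congr rfl fun p hp => by rw [(Finset.mem_filter.mp hp).2]
  have hrev : ∑ p ∈ E, v p.1 * (u p.2 - u p.1) = ∑ p ∈ E, v p.2 * (u p.1 - u p.2) :=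
    Finset.sum_nbij' Prod.swap Prod.swap hswap hswap (fun _ _ => rfl) (fun _ _ => rfl)
      fun _ _ => rfl
  have htwice : 2 * ∑ p ∈ E, v p.1 * (u p.2 - u p.1) = -edgeForm E u v := by
    rw [two_mul]
    nth_rewrite 2 [hrev]
    rw [edgeForm, ← Finset.sum_add_distrib, ← Finset.sum_neg_distrib]
    exact Finset.sum_congr rfl fun _ _ => by ring
  linarith

end EdgeForm

lemma sum_mul_lap (n : ℕ) (u v : Pt → ℝ) :
    ∑ x ∈ V n, v x * lap n u x = -((5 : ℝ) ^ n / 2) * edgeForm (Ed n) u v := by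
  simp only [lap, mul_left_comm _ ((5 : ℝ) ^ n), ← Finset.mul_sum]
  rw [sum_mul_sum_filter_fst_eq (fun p hp => (mem_V_of_mem_Ed hp).1) (fun p hp => swap_mem_Ed hp)]
  ring

lemma lap_eq_zero_adj_eq {n : ℕ} {u : Pt → ℝ} {a c : Pt} (hlap : lap n u a = 0)
    (hmax : IsMaxOn u (V n) a) (hac : Adj n a c) : u c = u a := by
  have hsum := (mul_eq_zero.mp hlap).resolve_left (by positivity)
  have hnonpos : ∀ p ∈ (Ed n).filter (fun p => p.1 = a), u p.2 - u p.1 ≤ 0 := fun p hp => by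
    obtain ⟨hpE, rfl⟩ := Finset.mem_filter.mp hp
    exact sub_nonpos.mpr (hmax (mem_V_of_mem_Ed hpE).2)
  have := (Finset.sum_eq_zero_iff_of_nonpos hnonpos).mp hsum (a, c)
    (Finset.mem_filter.mpr ⟨hac, rfl⟩)
  exact sub_eq_zero.mp this

lemma le_max_of_lap_eq_zero {n : ℕ} {u : Pt → ℝ} {w : Pt}
    (hharm : ∀ x ∈ V n, x ∉ V 0 → x ≠ w → lap n u x = 0) (hb : ∀ i, u (sierA i) = 0)
    {y : Pt} (hy : y ∈ V n) : u y ≤ max (u w) 0 := by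
  obtain ⟨z, hz, hzmax⟩ := (V n).exists_max_image u ⟨_, sierA_mem_V n 0⟩
  refine (hzmax y hy).trans ?_
  -- a maximum point off `V 0 ∪ {w}` passes the maximum on along a path to `sierA 0`
  suffices key : ∀ a, Relation.ReflTransGen (Adj n) a (sierA 0) → a ∈ V n →
      IsMaxOn u (V n) a → u a ≤ max (u w) 0 from
    key z (reflTransGen_adj_sierA hz 0) hz hzmax
  intro a hpath
  induction hpath using Relation.ReflTransGen.head_induction_on with
  | refl => exact fun _ _ => (hb 0).trans_le (le_max_right _ _)
  | @head a c hac _ ih =>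
    intro ha hamax
    by_cases ha0 : a ∈ V 0
    · obtain ⟨i, rfl⟩ := mem_V_zero.mp ha0
      exact (hb i).trans_le (le_max_right _ _)
    by_cases haw : a = w
    · exact haw ▸ le_max_left _ _
    have hca := lap_eq_zero_adj_eq (hharm a ha ha0 haw) hamax hac
    exact hca ▸ ih (mem_V_of_mem_Ed hac).2 fun x hx => (hamax hx).trans_eq hca.symm

lemma abs_lap_le {n : ℕ} {u : Pt → ℝ} {L : ℝ} (hL : ∀ p ∈ Ed n, |u p.1 - u p.2| ≤ L)
    (x : Pt) : |lap n u x| ≤ 5 ^ n * (degree n x * L) := by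
  rw [lap, abs_mul, abs_of_pos (by positivity)]
  gcongr
  calc |∑ p ∈ (Ed n).filter (fun p => p.1 = x), (u p.2 - u p.1)|
      ≤ ∑ p ∈ (Ed n).filter (fun p => p.1 = x), |u p.2 - u p.1| :=
        Finset.abs_sum_le_sum_abs _ _
    _ ≤ ∑ _p ∈ (Ed n).filter (fun p => p.1 = x), L :=
        Finset.sum_le_sum fun p hp =>
          abs_sub_comm (u p.1) (u p.2) ▸ hL p (Finset.mem_filter.mp hp).1
    _ = degree n x * L := by rw [Finset.sum_const, nsmul_eq_mul, degree]

lemma le_div_of_mul_sq_le {a b t : ℝ} (ha : 0 < a) (hb : 0 ≤ b) (h : a * t ^ 2 ≤ b * t) :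
    t ≤ b / a := by
  rw [le_div_iff₀ ha]
  rcases le_or_gt t 0 with ht | ht
  · nlinarith
  · nlinarith

section GreenFunction

variable {n : ℕ} {G : Pt → Pt → ℝ}

lemma green_sierA (hG : IsGreenFamily n G) {z : Pt} (hz : z ∈ V n) (i : Fin 3) :
    G (sierA i) z = 0 := by
  by_cases hz0 : z ∈ V 0
  · exact hG.2 z hz0 _
  · exact (hG.1 z hz hz0).2.2 i

lemma edgeForm_green (hG : IsGreenFamily n G) {z : Pt} (hz : z ∈ V n) {v : Pt → ℝ}
    (hv : ∀ i, v (sierA i) = 0) :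
    5 ^ n * edgeForm (Ed n) (fun x => G x z) v = 2 * 3 ^ n * v z := by
  by_cases hz0 : z ∈ V 0
  · obtain ⟨i, rfl⟩ := mem_V_zero.mp hz0
    simp [edgeForm, hG.2 _ hz0, hv i]
  obtain ⟨hpole, hharm, -⟩ := hG.1 z hz hz0
  have hsum : ∑ x ∈ V n, v x * lap n (fun x => G x z) x = v z * -3 ^ n := by
    rw [Finset.sum_eq_single_of_mem z hz fun x hx hxz => ?_, hpole]
    by_cases hx0 : x ∈ V 0
    · obtain ⟨i, rfl⟩ := mem_V_zero.mp hx0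
      rw [hv i, zero_mul]
    · rw [hharm x hx hx0 hxz, mul_zero]
  rw [sum_mul_lap] at hsum
  linarith

lemma green_symm (hG : IsGreenFamily n G) {x y : Pt} (hx : x ∈ V n) (hy : y ∈ V n) :
    G x y = G y x := by
  have hxy := edgeForm_green hG hx (v := fun t => G t y) (green_sierA hG hy)
  have hyx := edgeForm_green hG hy (v := fun t => G t x) (green_sierA hG hx)
  rw [edgeForm_comm] at hyx
  exact mul_left_cancel₀ (by positivity) (hxy.symm.trans hyx)

lemma green_diag_nonneg (hG : IsGreenFamily n G) {w : Pt} (hw : w ∈ V n) : 0 ≤ G w w := by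
  have h := edgeForm_green hG hw (v := fun t => G t w) (green_sierA hG hw)
  have : 0 ≤ 2 * 3 ^ n * G w w := h ▸ mul_nonneg (by positivity) (edgeForm_self_nonneg _ _)
  exact (mul_nonneg_iff_of_pos_left (by positivity)).mp this

lemma green_le_diag (hG : IsGreenFamily n G) {w y : Pt} (hw : w ∈ V n) (hy : y ∈ V n) :
    G y w ≤ G w w := by
  by_cases hw0 : w ∈ V 0
  · rw [hG.2 w hw0, hG.2 w hw0]
  obtain ⟨-, hharm, hb⟩ := hG.1 w hw hw0
  have := le_max_of_lap_eq_zero (u := fun x => G x w) hharm hb hy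
  rwa [max_eq_left (green_diag_nonneg hG hw)] at this

lemma abs_green_diag_sub_le (hG : IsGreenFamily n G) {x y : Pt} (hxy : (x, y) ∈ Ed n) :
    |G x x - G y y| ≤ (3 / 5) ^ n := by
  obtain ⟨hx, hy⟩ := mem_V_of_mem_Ed hxy
  set F : Pt → ℝ := (fun t => G t x) - (fun t => G t y) with hFdef
  have hF : ∀ i, F (sierA i) = 0 := by simp [F, green_sierA hG hx, green_sierA hG hy]
  have henergy : 5 ^ n * edgeForm (Ed n) F F = 2 * 3 ^ n * (F x - F y) := by
    rw [edgeForm_sub_left, mul_sub, edgeForm_green hG hx hF, edgeForm_green hG hy hF]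
    ring
  have hedge := mul_le_mul_of_nonneg_left
    (two_mul_sq_le_edgeForm hxy (swap_mem_Ed hxy) (ne_of_mem_Ed hxy) F)
    (by positivity : (0 : ℝ) ≤ 5 ^ n)
  have ht : F x - F y ≤ 3 ^ n / 5 ^ n :=
    le_div_of_mul_sq_le (by positivity) (by positivity) (by linarith)
  have hsymm := green_symm hG hx hy
  have hFx := green_le_diag hG hx hy
  have hFy := green_le_diag hG hy hx
  simp only [hFdef, Pi.sub_apply] at ht
  rw [div_pow, abs_le]
  constructor <;> linarith

end GreenFunction

theorem green_diagonal_lipschitz_and_laplacian_bound_general (n : ℕ)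
    (G : Pt → Pt → ℝ) (hG : IsGreenFamily n G) (diagG : Pt → ℝ)
    (hdiag0 : ∀ i : Fin 3, diagG (sierA i) = 0)
    (hdiag : ∀ x ∈ (V n : Set Pt), x ∉ (V 0 : Set Pt) → diagG x = G x x) :
    (∀ p ∈ Ed n, |diagG p.1 - diagG p.2| ≤ (3 / 5 : ℝ) ^ n) ∧
    ∀ x ∈ (V n : Set Pt), |lap n diagG x| ≤ 4 * 3 ^ n := by
  have hdiagG : ∀ x ∈ V n, diagG x = G x x := fun x hx => by
    by_cases hx0 : x ∈ V 0
    · obtain ⟨i, rfl⟩ := mem_V_zero.mp hx0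
      rw [hdiag0 i, hG.2 _ hx0]
    · exact hdiag x hx hx0
  have hlip : ∀ p ∈ Ed n, |diagG p.1 - diagG p.2| ≤ (3 / 5 : ℝ) ^ n := fun p hp => by
    obtain ⟨h₁, h₂⟩ := mem_V_of_mem_Ed hp
    rw [hdiagG _ h₁, hdiagG _ h₂]
    exact abs_green_diag_sub_le hG hp
  refine ⟨hlip, fun x _ => ?_⟩
  calc |lap n diagG x| ≤ 5 ^ n * (degree n x * (3 / 5) ^ n) := abs_lap_le hlip x
    _ ≤ 5 ^ n * (4 * (3 / 5) ^ n) := by gcongr; exact_mod_cast degree_le_four n x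
    _ = 4 * 3 ^ n := by rw [div_pow]; field_simp

/-- For the diagonal function `𝒢_n(x) = G_n(x,x)` (set to `0` on `V₀`):
(a) `|𝒢_n x − 𝒢_n y| ≤ (3/5)^n` along edges of `E_n`, and consequently
(b) `|Δ_n 𝒢_n x| ≤ 4·3^n` on `V_n`. -/
theorem green_diagonal_lipschitz_and_laplacian_bound (n : ℕ) (hn : 1 ≤ n)
    (G : Pt → Pt → ℝ) (hG : IsGreenFamily n G) (diagG : Pt → ℝ)
    (hdiag0 : ∀ i : Fin 3, diagG (sierA i) = 0)
    (hdiag : ∀ x ∈ (V n : Set Pt), x ∉ (V 0 : Set Pt) → diagG x = G x x) :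
    (∀ p ∈ Ed n, |diagG p.1 - diagG p.2| ≤ (3 / 5 : ℝ) ^ n) ∧
    ∀ x ∈ (V n : Set Pt), |lap n diagG x| ≤ 4 * 3 ^ n :=
  green_diagonal_lipschitz_and_laplacian_bound_general n G hG diagG hdiag0 hdiag

end
end

section
/- Assume φ* > 0. Then the density function ρ is continuous and strictly increasing on [0, φ*) with ρ(0) = 0, and ρ is a bijection from [0, φ*) onto [0, ρ*), where ρ* = sup_{0≤φ<φ*} ρ(φ). -/
/-! Write `ρ = N / Z` with `N(φ) = Σ k aₖ φᵏ`, `Z(φ) = Σ aₖ φᵏ`, `aₖ = 1 / g(k)!`. For `φ₁ < φ₂`,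
`N(φ₂) Z(φ₁) - N(φ₁) Z(φ₂) = Σ_{j,k} (j - k) aⱼ aₖ φ₂ʲ φ₁ᵏ`, and symmetrising in `(j, k)` turns the
summand into `½ (j - k) (φ₂ʲ φ₁ᵏ - φ₂ᵏ φ₁ʲ) aⱼ aₖ`, which is nonnegative and positive at `(1, 0)`;
this is strict monotonicity. Both series converge locally uniformly below the radius, so `ρ` is
continuous there, and the intermediate value theorem on `[0, φ]` identifies the image. -/

open scoped Classical

noncomputable section

/-- `g(k)! = g(1) ⋯ g(k)`, with `g(0)! = 1`. -/
def gfact (g : ℕ → ℝ) (k : ℕ) : ℝ := ∏ j ∈ Finset.range k, g (j + 1)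

/-- The domain `[0, φ*)`, where `φ*` is the radius of convergence of the
partition function `Z(φ) = Σ_k φ^k / g(k)!`: for `φ ≥ 0`, `φ < φ*` iff the
series is summable at some `ψ > φ`. -/
def belowRadius (g : ℕ → ℝ) : Set ℝ :=
  {φ : ℝ | 0 ≤ φ ∧ ∃ ψ : ℝ, φ < ψ ∧ Summable fun k : ℕ => ψ ^ k / gfact g k}

/-- The mean particle density `ρ(φ) = Z(φ)⁻¹ Σ_k k φ^k / g(k)!`. -/
def density (g : ℕ → ℝ) (φ : ℝ) : ℝ :=
  (∑' k : ℕ, (k : ℝ) * φ ^ k / gfact g k) / ∑' k : ℕ, φ ^ k / gfact g k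

open Set Filter Topology

theorem tsum_mul_tsum_lt_of_monotone_ratio {x y : ℕ → ℝ} (hx : 0 ≤ x) (hy : 0 ≤ y)
    (sx : Summable x) (sy : Summable y) (skx : Summable fun k => k * x k)
    (sky : Summable fun k => k * y k) (hratio : ∀ ⦃j k⦄, j ≤ k → x j * y k ≤ x k * y j)
    (hstrict : x 0 * y 1 < x 1 * y 0) :
    (∑' k, k * y k) * ∑' k, x k < (∑' k, k * x k) * ∑' k, y k := by
  set t : ℕ × ℕ → ℝ := fun p => ((p.1 : ℝ) - p.2) * x p.1 * y p.2
  have hkx : 0 ≤ fun k : ℕ => (k : ℝ) * x k := fun k => mul_nonneg k.cast_nonneg (hx k)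
  have hky : 0 ≤ fun k : ℕ => (k : ℝ) * y k := fun k => mul_nonneg k.cast_nonneg (hy k)
  have ht : HasSum t ((∑' k, k * x k) * (∑' k, y k) - (∑' k, x k) * ∑' k, k * y k) := by
    have ht_eq : t = fun p => p.1 * x p.1 * y p.2 - x p.1 * (p.2 * y p.2) := by
      funext p
      ring
    rw [ht_eq]
    exact (skx.hasSum.mul sy.hasSum (skx.mul_of_nonneg sy hkx hy)).sub
      (sx.hasSum.mul sky.hasSum (sx.mul_of_nonneg sky hx hky))
  have hsymm : HasSum (fun p => t p + t p.swap)
      (2 * ((∑' k, k * x k) * (∑' k, y k) - (∑' k, x k) * ∑' k, k * y k)) := by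
    rw [two_mul]
    exact ht.add ((Equiv.prodComm ℕ ℕ).hasSum_iff.2 ht)
  have hterm : ∀ j k : ℕ, t (j, k) + t (k, j) = ((j : ℝ) - k) * (x j * y k - x k * y j) := by
    intro j k
    ring
  have hnonneg : (0 : ℕ × ℕ → ℝ) ≤ fun p => t p + t p.swap := by
    rintro ⟨j, k⟩
    simp only [Pi.zero_apply, Prod.swap_prod_mk, hterm]
    rcases le_total j k with hjk | hkj
    · exact mul_nonneg_of_nonpos_of_nonpos (sub_nonpos.2 (Nat.cast_le.2 hjk))
        (sub_nonpos.2 (hratio hjk))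
    · exact mul_nonneg (sub_nonneg.2 (Nat.cast_le.2 hkj)) (sub_nonneg.2 (hratio hkj))
  have hpos : (0 : ℕ × ℕ → ℝ) (1, 0) < t (1, 0) + t (1, 0).swap := by
    simp only [Pi.zero_apply, Prod.swap_prod_mk, hterm]
    norm_num
    linarith
  linarith [hasSum_lt hnonneg hpos hasSum_zero hsymm]

section Weights

variable {w : ℕ → ℝ}

theorem summable_pow_div_of_le (hw : ∀ k, 0 < w k) {φ ψ : ℝ} (hφ : 0 ≤ φ) (hφψ : φ ≤ ψ)
    (hψ : Summable fun k : ℕ => ψ ^ k / w k) : Summable fun k : ℕ => φ ^ k / w k :=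
  hψ.of_nonneg_of_le (fun k => div_nonneg (pow_nonneg hφ k) (hw k).le) fun k => by
    have := hw k
    gcongr

theorem summable_natCast_mul_pow_div_of_lt (hw : ∀ k, 0 < w k) {φ ψ : ℝ} (hφ : 0 ≤ φ)
    (hφψ : φ < ψ) (hψ : Summable fun k : ℕ => ψ ^ k / w k) :
    Summable fun k : ℕ => k * φ ^ k / w k := by
  have hψ₀ : 0 < ψ := hφ.trans_lt hφψ
  have hratio : Tendsto (fun k : ℕ => k * (φ / ψ) ^ k) atTop (𝓝 0) :=
    tendsto_self_mul_const_pow_of_lt_one (div_nonneg hφ hψ₀.le) ((div_lt_one hψ₀).2 hφψ)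
  refine hψ.of_norm_bounded_eventually_nat ?_
  filter_upwards [hratio.eventually (ge_mem_nhds zero_lt_one)] with k hk
  have hwk := hw k
  calc ‖k * φ ^ k / w k‖ = k * (φ / ψ) ^ k * (ψ ^ k / w k) := by
        rw [Real.norm_of_nonneg (by positivity), div_pow]
        field_simp
    _ ≤ 1 * (ψ ^ k / w k) := by gcongr
    _ = ψ ^ k / w k := one_mul _

theorem tsum_pow_div_pos (hw : ∀ k, 0 < w k) {φ : ℝ} (hφ : 0 ≤ φ)
    (hs : Summable fun k : ℕ => φ ^ k / w k) : 0 < ∑' k : ℕ, φ ^ k / w k :=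
  hs.tsum_pos (fun k => div_nonneg (pow_nonneg hφ k) (hw k).le) 0 (by simpa using hw 0)

theorem continuousOn_tsum_mul_pow_div (hw : ∀ k, 0 < w k) {c : ℕ → ℝ} (hc : 0 ≤ c) {r : ℝ}
    (hr : Summable fun k : ℕ => c k * r ^ k / w k) :
    ContinuousOn (fun x => ∑' k : ℕ, c k * x ^ k / w k) (Icc (-r) r) := by
  refine continuousOn_tsum (fun k => by fun_prop) hr fun k x hx => ?_
  rw [Real.norm_eq_abs, abs_div, abs_mul, abs_pow, abs_of_nonneg (hc k), abs_of_pos (hw k)]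
  have := hc k
  have := hw k
  gcongr
  exact abs_le.2 hx

end Weights

theorem pow_mul_pow_le_pow_mul_pow {a b : ℝ} (ha : 0 ≤ a) (hab : a ≤ b) {j k : ℕ} (hjk : j ≤ k) :
    b ^ j * a ^ k ≤ b ^ k * a ^ j := by
  obtain ⟨m, rfl⟩ := Nat.exists_eq_add_of_le hjk
  have hb : 0 ≤ b := ha.trans hab
  calc b ^ j * a ^ (j + m) = b ^ j * a ^ j * a ^ m := by ring
    _ ≤ b ^ j * a ^ j * b ^ m := by gcongr
    _ = b ^ (j + m) * a ^ j := by ring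

theorem StrictMonoOn.image_eq_of_continuousOn {α β : Type*} [ConditionallyCompleteLinearOrder α]
    [DenselyOrdered α] [TopologicalSpace α] [OrderTopology α] [LinearOrder β] [TopologicalSpace β]
    [OrderClosedTopology β] {f : α → β} {S : Set α} {a : α} (hf : StrictMonoOn f S)
    (hcont : ContinuousOn f S) (hS : ∀ x ∈ S, a ≤ x ∧ Icc a x ⊆ S)
    (hnoMax : ∀ x ∈ S, ∃ x' ∈ S, x < x') :
    f '' S = {y | f a ≤ y ∧ ∃ x ∈ S, y < f x} := by
  ext y
  constructor
  · rintro ⟨x, hx, rfl⟩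
    obtain ⟨hax, hIcc⟩ := hS x hx
    obtain ⟨x', hx', hxx'⟩ := hnoMax x hx
    exact ⟨hf.monotoneOn (hIcc ⟨le_rfl, hax⟩) hx hax, x', hx', hf hx hx' hxx'⟩
  · rintro ⟨hay, x, hx, hyx⟩
    obtain ⟨hax, hIcc⟩ := hS x hx
    obtain ⟨z, hz, rfl⟩ := intermediate_value_Icc hax (hcont.mono hIcc) ⟨hay, hyx.le⟩
    exact ⟨z, hIcc hz, rfl⟩

section ZeroRange

variable {g : ℕ → ℝ}

theorem gfact_pos (hg : ∀ k : ℕ, 1 ≤ k → 0 < g k) (k : ℕ) : 0 < gfact g k :=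
  Finset.prod_pos fun j _ => hg (j + 1) (Nat.le_add_left 1 j)

theorem Icc_subset_belowRadius {φ : ℝ} (hφ : φ ∈ belowRadius g) : Icc 0 φ ⊆ belowRadius g := by
  obtain ⟨-, ψ, hφψ, hψ⟩ := hφ
  exact fun x hx => ⟨hx.1, ψ, hx.2.trans_lt hφψ, hψ⟩

theorem exists_gt_mem_belowRadius {φ : ℝ} (hφ : φ ∈ belowRadius g) :
    ∃ φ' ∈ belowRadius g, φ < φ' := by
  obtain ⟨hφ₀, ψ, hφψ, hψ⟩ := hφ
  exact ⟨(φ + ψ) / 2, ⟨by linarith, ψ, by linarith, hψ⟩, by linarith⟩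

theorem density_zero (g : ℕ → ℝ) : density g 0 = 0 := by
  have hN : ∀ k : ℕ, (k : ℝ) * (0 : ℝ) ^ k / gfact g k = 0 := by
    rintro (_ | k) <;> simp
  simp [density, hN]

theorem continuousOn_density (hg : ∀ k : ℕ, 1 ≤ k → 0 < g k) :
    ContinuousOn (density g) (belowRadius g) := by
  rintro φ ⟨hφ, ψ, hφψ, hψ⟩
  have hw := gfact_pos hg
  obtain ⟨r, hφr, hrψ⟩ := exists_between hφψ
  have hr : 0 ≤ r := hφ.trans hφr.le
  have hnhds : Icc (-r) r ∈ 𝓝 φ := Icc_mem_nhds (by linarith) hφr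
  have hZ := continuousOn_tsum_mul_pow_div hw (c := 1) (fun _ => zero_le_one)
    (by simpa using summable_pow_div_of_le hw hr hrψ.le hψ)
  have hN := continuousOn_tsum_mul_pow_div hw (c := fun k => k) (fun k => k.cast_nonneg)
    (summable_natCast_mul_pow_div_of_lt hw hr hrψ hψ)
  simp only [Pi.one_apply, one_mul] at hZ
  have hZφ := tsum_pow_div_pos hw hφ (summable_pow_div_of_le hw hφ hφψ.le hψ)
  exact ((hN.continuousAt hnhds).div (hZ.continuousAt hnhds) hZφ.ne').continuousWithinAt

theorem strictMonoOn_density (hg : ∀ k : ℕ, 1 ≤ k → 0 < g k) :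
    StrictMonoOn (density g) (belowRadius g) := by
  rintro φ₁ ⟨hφ₁, -⟩ φ₂ ⟨hφ₂, ψ, hφ₂ψ, hψ⟩ hlt
  have hw := gfact_pos hg
  have hφ₁ψ := hlt.trans hφ₂ψ
  have sZ₁ := summable_pow_div_of_le hw hφ₁ hφ₁ψ.le hψ
  have sZ₂ := summable_pow_div_of_le hw hφ₂ hφ₂ψ.le hψ
  have sN₁ := summable_natCast_mul_pow_div_of_lt hw hφ₁ hφ₁ψ hψ
  have sN₂ := summable_natCast_mul_pow_div_of_lt hw hφ₂ hφ₂ψ hψ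
  refine (div_lt_div_iff₀ (tsum_pow_div_pos hw hφ₁ sZ₁) (tsum_pow_div_pos hw hφ₂ sZ₂)).2 ?_
  simp only [mul_div_assoc] at sN₁ sN₂ ⊢
  refine tsum_mul_tsum_lt_of_monotone_ratio (fun k => div_nonneg (pow_nonneg hφ₂ k) (hw k).le)
    (fun k => div_nonneg (pow_nonneg hφ₁ k) (hw k).le)
    sZ₂ sZ₁ sN₂ sN₁ (fun j k hjk => ?_) ?_
  · have hwjk := mul_pos (hw j) (hw k)
    calc φ₂ ^ j / gfact g j * (φ₁ ^ k / gfact g k)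
        = φ₂ ^ j * φ₁ ^ k / (gfact g j * gfact g k) := by ring
      _ ≤ φ₂ ^ k * φ₁ ^ j / (gfact g j * gfact g k) :=
        div_le_div_of_nonneg_right (pow_mul_pow_le_pow_mul_pow hφ₁ hlt.le hjk) hwjk.le
      _ = φ₂ ^ k / gfact g k * (φ₁ ^ j / gfact g j) := by ring
  · simp only [gfact, Finset.range_zero, Finset.range_one, Finset.prod_empty, Finset.prod_singleton,
      pow_zero, pow_one, div_one, one_mul, zero_add, mul_one]
    exact div_lt_div_of_pos_right hlt (hg 1 le_rfl)

end ZeroRange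

theorem density_strictMono_bijection_general (g : ℕ → ℝ)
    (hg : ∀ k : ℕ, 1 ≤ k → 0 < g k) :
    ContinuousOn (density g) (belowRadius g) ∧
    StrictMonoOn (density g) (belowRadius g) ∧
    density g 0 = 0 ∧
    Set.InjOn (density g) (belowRadius g) ∧
    density g '' belowRadius g
      = {y : ℝ | 0 ≤ y ∧ ∃ φ ∈ belowRadius g, y < density g φ} := by
  have hmono := strictMonoOn_density hg
  have hcont := continuousOn_density hg
  refine ⟨hcont, hmono, density_zero g, hmono.injOn, ?_⟩
  rw [hmono.image_eq_of_continuousOn hcont (fun φ hφ => ⟨hφ.1, Icc_subset_belowRadius hφ⟩)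
    fun φ hφ => exists_gt_mem_belowRadius hφ, density_zero]

/-- If `φ* > 0` then `ρ` is continuous and strictly increasing on `[0, φ*)`,
`ρ(0) = 0`, and `ρ` is a bijection from `[0, φ*)` onto `[0, ρ*)` where
`ρ* = sup_{0 ≤ φ < φ*} ρ(φ)` (the target interval `[0, ρ*)` being expressed as
`{y | 0 ≤ y ∧ ∃ φ ∈ [0,φ*), y < ρ(φ)}`). -/
theorem density_strictMono_bijection (g : ℕ → ℝ)
    (hg0 : g 0 = 0) (hg : ∀ k : ℕ, 1 ≤ k → 0 < g k)
    (hphistar : ∃ ψ : ℝ, 0 < ψ ∧ Summable fun k : ℕ => ψ ^ k / gfact g k) :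
    ContinuousOn (density g) (belowRadius g) ∧
    StrictMonoOn (density g) (belowRadius g) ∧
    density g 0 = 0 ∧
    Set.InjOn (density g) (belowRadius g) ∧
    density g '' belowRadius g
      = {y : ℝ | 0 ≤ y ∧ ∃ φ ∈ belowRadius g, y < density g φ} :=
  density_strictMono_bijection_general g hg

end
end
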